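/- arXiv:2210.15204 — 2 statements merged into one kernel-verified Lean document; each statement's English description precedes it below -/
import Mathlib

section
/- There exists a universal constant C > 0 such that for any a < b and any vector field v = (v₁,v₂) ∈ C¹ on the closure of Ω_{a,b} having zero flux and satisfying v·n = 0 on ∂Ω_{a,b} ∩ ∂Ω, one has ‖v‖_{L²(Ω_{a,b})} ≤ C ‖f‖_{L^∞(a,b)} (1 + ‖f₂'‖_{L^∞(a,b)}) ‖∇v‖_{L²(Ω_{a,b})}. -/
open MeasureTheory Set

/-- The channel piece `Ω_{a,b} = {x ∈ Ω : a < x₁ < b}` where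
`Ω = {(x₁,x₂) : f₁(x₁) < x₂ < f₂(x₁)}`. -/
def chan (f₁ f₂ : ℝ → ℝ) (a b : ℝ) : Set (ℝ × ℝ) :=
  {x : ℝ × ℝ | a < x.1 ∧ x.1 < b ∧ f₁ x.1 < x.2 ∧ x.2 < f₂ x.1}

/-- The pointwise squared gradient `|∇v|²` of the vector field `v = (v₁, v₂)`. -/
noncomputable def gsq (v₁ v₂ : ℝ × ℝ → ℝ) (x : ℝ × ℝ) : ℝ :=
  (fderiv ℝ v₁ x (1, 0)) ^ 2 + (fderiv ℝ v₁ x (0, 1)) ^ 2 +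
    (fderiv ℝ v₂ x (1, 0)) ^ 2 + (fderiv ℝ v₂ x (0, 1)) ^ 2

/-!
On a vertical slice `x₁ = const` the zero flux forces `v₁(x₁, ·)` to vanish somewhere, so
`|v₁| ≤ ∫ |∂₂v₁|` along the slice. At the upper wall `v·n = 0` gives
`|v₂(x₁, f₂ x₁)| ≤ |f₂'| |v₁(x₁, f₂ x₁)|`, and integrating `∂₂v₂` down from there bounds `|v₂|`.
Cauchy–Schwarz turns these pointwise bounds into
`∫ (v₁² + v₂²) ≤ 2 f(x₁)² (1 + |f₂'|)² ∫ |∂₂v|²` on the slice, and Fubini gives the claim with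
`C = 2`. Since `v` is `C¹` up to the compact closure, `∇v` is bounded on `Ω_{a,b}`, so the
right-hand side is a genuine integral and not the junk value `0`.
-/

theorem sq_intervalIntegral_le_mul_intervalIntegral_sq {ψ : ℝ → ℝ} {l u : ℝ} (hlu : l < u)
    (hψ : IntervalIntegrable ψ volume l u)
    (hψ2 : IntervalIntegrable (fun y => ψ y ^ 2) volume l u) :
    (∫ y in l..u, ψ y) ^ 2 ≤ (u - l) * ∫ y in l..u, ψ y ^ 2 := by
  set I := ∫ y in l..u, ψ y
  -- `0 ≤ ∫ ((u - l) ψ - I)²`, expanded, is the claim multiplied by `u - l`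
  have hsq : 0 ≤ ∫ y in l..u, ((u - l) * ψ y - I) ^ 2 :=
    intervalIntegral.integral_nonneg hlu.le fun y _ => sq_nonneg _
  have hexpand : ∫ y in l..u, ((u - l) * ψ y - I) ^ 2
      = (u - l) * ((u - l) * ∫ y in l..u, ψ y ^ 2) - (u - l) * I ^ 2 := by
    have e : ∀ y, ((u - l) * ψ y - I) ^ 2
        = (u - l) ^ 2 * ψ y ^ 2 - 2 * (u - l) * I * ψ y + I ^ 2 := fun y => by ring
    simp_rw [e]
    rw [intervalIntegral.integral_add ((hψ2.const_mul _).sub (hψ.const_mul _))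
        intervalIntegrable_const, intervalIntegral.integral_sub (hψ2.const_mul _) (hψ.const_mul _),
      intervalIntegral.integral_const_mul, intervalIntegral.integral_const_mul,
      intervalIntegral.integral_const, smul_eq_mul]
    ring
  rw [hexpand] at hsq
  nlinarith

theorem abs_sub_le_intervalIntegral_abs_deriv {g φ : ℝ → ℝ} {l u p q : ℝ}
    (hg : ContinuousOn g (Icc l u)) (hd : ∀ y ∈ Ioo l u, HasDerivAt g (φ y) y)
    (hφ : IntervalIntegrable φ volume l u) (hp : p ∈ Icc l u) (hq : q ∈ Icc l u) :
    |g q - g p| ≤ ∫ y in l..u, |φ y| := by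
  wlog hpq : p ≤ q generalizing p q
  · rw [abs_sub_comm]
    exact this hq hp (le_of_not_ge hpq)
  have hftc : ∫ y in p..q, φ y = g q - g p :=
    intervalIntegral.integral_eq_sub_of_hasDerivAt_of_le hpq
      (hg.mono (Icc_subset_Icc hp.1 hq.2))
      (fun y hy => hd y ⟨hp.1.trans_lt hy.1, hy.2.trans_le hq.2⟩)
      (hφ.mono_set (uIcc_subset_uIcc (Icc_subset_uIcc hp) (Icc_subset_uIcc hq)))
  rw [← hftc]
  exact (intervalIntegral.abs_integral_le_integral_abs hpq).trans
    (intervalIntegral.integral_mono_interval hp.1 hpq hq.2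
      (.of_forall fun y => abs_nonneg (φ y)) hφ.abs)

theorem sq_add_sq_le_of_abs_le {x y s t B : ℝ} (hB : 0 ≤ B) (hx : |x| ≤ s)
    (hy : |y| ≤ B * s + t) : x ^ 2 + y ^ 2 ≤ 2 * (1 + B) ^ 2 * (s ^ 2 + t ^ 2) := by
  have hs : 0 ≤ s := (abs_nonneg x).trans hx
  have hx2 : x ^ 2 ≤ s ^ 2 := sq_le_sq' (abs_le.1 hx).1 (abs_le.1 hx).2
  have hy2 : y ^ 2 ≤ (B * s + t) ^ 2 := sq_le_sq' (abs_le.1 hy).1 (abs_le.1 hy).2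
  nlinarith [sq_nonneg (B * s - t), mul_nonneg hB hs, mul_nonneg (mul_nonneg hB hB) (sq_nonneg t),
    mul_nonneg hB (sq_nonneg t), mul_nonneg hB (sq_nonneg s)]

theorem exists_eq_zero_of_intervalIntegral_eq_zero {g : ℝ → ℝ} {l u : ℝ} (hlu : l < u)
    (hg : ContinuousOn g (Icc l u)) (h0 : ∫ y in l..u, g y = 0) : ∃ c ∈ Icc l u, g c = 0 := by
  obtain ⟨c, hc, hgc⟩ := exists_eq_interval_average hlu.ne (by rwa [uIcc_of_le hlu.le])
  rw [interval_average_eq_div, h0, zero_div] at hgc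
  rw [uIoo_of_le hlu.le] at hc
  exact ⟨c, Ioo_subset_Icc_self hc, hgc⟩

theorem intervalIntegral_sq_add_sq_le {g₁ g₂ φ₁ φ₂ : ℝ → ℝ} {l u B : ℝ} (hlu : l < u) (hB : 0 ≤ B)
    (hg₁ : ContinuousOn g₁ (Icc l u)) (hg₂ : ContinuousOn g₂ (Icc l u))
    (hd₁ : ∀ y ∈ Ioo l u, HasDerivAt g₁ (φ₁ y) y) (hd₂ : ∀ y ∈ Ioo l u, HasDerivAt g₂ (φ₂ y) y)
    (hφ₁ : IntervalIntegrable φ₁ volume l u) (hφ₂ : IntervalIntegrable φ₂ volume l u)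
    (hφ₁2 : IntervalIntegrable (fun y => φ₁ y ^ 2) volume l u)
    (hφ₂2 : IntervalIntegrable (fun y => φ₂ y ^ 2) volume l u)
    (h0 : ∫ y in l..u, g₁ y = 0) (hu : |g₂ u| ≤ B * |g₁ u|) :
    ∫ y in l..u, (g₁ y ^ 2 + g₂ y ^ 2) ≤
      2 * (u - l) ^ 2 * (1 + B) ^ 2 * ∫ y in l..u, (φ₁ y ^ 2 + φ₂ y ^ 2) := by
  obtain ⟨c, hc, hgc⟩ := exists_eq_zero_of_intervalIntegral_eq_zero hlu hg₁ h0
  have hu_mem : u ∈ Icc l u := right_mem_Icc.2 hlu.le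
  set I₁ := ∫ y in l..u, |φ₁ y|
  set I₂ := ∫ y in l..u, |φ₂ y|
  have hg₁_le : ∀ y ∈ Icc l u, |g₁ y| ≤ I₁ := fun y hy => by
    simpa [hgc] using abs_sub_le_intervalIntegral_abs_deriv hg₁ hd₁ hφ₁ hc hy
  have hg₂_le : ∀ y ∈ Icc l u, |g₂ y| ≤ B * I₁ + I₂ := fun y hy => calc
    |g₂ y| ≤ |g₂ u| + |g₂ y - g₂ u| := by simpa using abs_add_le (g₂ u) (g₂ y - g₂ u)
    _ ≤ B * I₁ + I₂ := add_le_add (hu.trans (by gcongr; exact hg₁_le u hu_mem))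
        (abs_sub_le_intervalIntegral_abs_deriv hg₂ hd₂ hφ₂ hu_mem hy)
  have hI₁ : I₁ ^ 2 ≤ (u - l) * ∫ y in l..u, φ₁ y ^ 2 := by
    simpa only [sq_abs] using sq_intervalIntegral_le_mul_intervalIntegral_sq hlu
      hφ₁.abs (by simpa only [sq_abs] using hφ₁2)
  have hI₂ : I₂ ^ 2 ≤ (u - l) * ∫ y in l..u, φ₂ y ^ 2 := by
    simpa only [sq_abs] using sq_intervalIntegral_le_mul_intervalIntegral_sq hlu
      hφ₂.abs (by simpa only [sq_abs] using hφ₂2)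
  calc ∫ y in l..u, (g₁ y ^ 2 + g₂ y ^ 2)
      ≤ ∫ _ in l..u, 2 * (1 + B) ^ 2 * (I₁ ^ 2 + I₂ ^ 2) :=
        intervalIntegral.integral_mono_on hlu.le
          (((hg₁.pow 2).add (hg₂.pow 2)).intervalIntegrable_of_Icc hlu.le) intervalIntegrable_const
          fun y hy => sq_add_sq_le_of_abs_le hB (hg₁_le y hy) (hg₂_le y hy)
    _ = (u - l) * (2 * (1 + B) ^ 2) * (I₁ ^ 2 + I₂ ^ 2) := by
        rw [intervalIntegral.integral_const, smul_eq_mul]; ring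
    _ ≤ (u - l) * (2 * (1 + B) ^ 2) *
          ((u - l) * (∫ y in l..u, φ₁ y ^ 2) + (u - l) * ∫ y in l..u, φ₂ y ^ 2) := by
        have := sub_pos.2 hlu
        gcongr
    _ = 2 * (u - l) ^ 2 * (1 + B) ^ 2 * ∫ y in l..u, (φ₁ y ^ 2 + φ₂ y ^ 2) := by
        rw [intervalIntegral.integral_add hφ₁2 hφ₂2]; ring

theorem intervalIntegrable_of_abs_le {φ : ℝ → ℝ} {l u M : ℝ} (hlu : l ≤ u) (hφ : Measurable φ)
    (hM : ∀ y ∈ Ioo l u, |φ y| ≤ M) : IntervalIntegrable φ volume l u := by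
  rw [intervalIntegrable_iff_integrableOn_Ioo_of_le hlu]
  exact Measure.integrableOn_of_bounded measure_Ioo_lt_top.ne hφ.aestronglyMeasurable
    ((ae_restrict_iff' measurableSet_Ioo).2 (.of_forall hM))

theorem ofReal_intervalIntegral_eq_lintegral {g : ℝ → ℝ} {l u : ℝ} (hlu : l ≤ u)
    (hg : IntervalIntegrable g volume l u) (hg0 : ∀ y, 0 ≤ g y) :
    ENNReal.ofReal (∫ y in l..u, g y) = ∫⁻ y in Ioo l u, ENNReal.ofReal (g y) := by
  rw [intervalIntegral.integral_of_le hlu, integral_Ioc_eq_integral_Ioo,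
    ofReal_integral_eq_lintegral_ofReal
      ((intervalIntegrable_iff_integrableOn_Ioo_of_le hlu).1 hg) (.of_forall hg0)]

section FDerivBound

variable {E F : Type*} [NormedAddCommGroup E] [NormedSpace ℝ E] [NormedAddCommGroup F]
  [NormedSpace ℝ F] {S : Set E} {v : E → F}

theorem exists_bound_norm_fderiv_near_of_contDiffOn_closure (hS : IsOpen S)
    (hK : IsCompact (closure S)) (hv : ContDiffOn ℝ 1 v (closure S)) {x : E}
    (hx : x ∈ closure S) :
    ∃ r > 0, ∃ M, ∀ y ∈ S ∩ Metric.ball x r, ‖fderiv ℝ v y‖ ≤ M := by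
  obtain ⟨u, hu, p, hp⟩ := contDiffWithinAt_nat.mp (hv x hx)
  rw [insert_eq_of_mem hx] at hu
  obtain ⟨O, hO, hxO, hOu⟩ := mem_nhdsWithin.mp hu
  obtain ⟨r, hr, hrO⟩ := Metric.nhds_basis_closedBall.mem_iff.mp (hO.mem_nhds hxO)
  have hsub : closure S ∩ Metric.closedBall x r ⊆ u := fun y hy => hOu ⟨hrO hy.2, hy.1⟩
  -- the first Taylor coefficient is continuous on `u`, hence bounded on a compact piece of it
  let D : E → E →L[ℝ] F := fun y => continuousMultilinearCurryFin1 ℝ E F (p y 1)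
  have hD : ContinuousOn D u :=
    (continuousMultilinearCurryFin1 ℝ E F).continuous.comp_continuousOn (hp.cont 1 le_rfl)
  obtain ⟨M, hM⟩ := (hK.inter_right Metric.isClosed_closedBall).exists_bound_of_continuousOn
    (hD.mono hsub)
  refine ⟨r, hr, M, fun y hy => ?_⟩
  have hy' : y ∈ closure S ∩ Metric.closedBall x r :=
    ⟨subset_closure hy.1, Metric.ball_subset_closedBall hy.2⟩
  have hu_nhds : u ∈ nhds y :=
    Filter.mem_of_superset ((hS.inter hO).mem_nhds ⟨hy.1, hrO hy'.2⟩)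
      fun z hz => hOu ⟨hz.2, subset_closure hz.1⟩
  have hderiv : fderiv ℝ v y = D y :=
    ((hp.hasFDerivWithinAt one_ne_zero (hsub hy')).hasFDerivAt hu_nhds).fderiv
  exact hderiv ▸ hM y hy'

theorem exists_bound_norm_fderiv_of_contDiffOn_closure (hS : IsOpen S)
    (hK : IsCompact (closure S)) (hv : ContDiffOn ℝ 1 v (closure S)) :
    ∃ M, ∀ x ∈ S, ‖fderiv ℝ v x‖ ≤ M := by
  have hlocal : ∀ x ∈ closure S, ∃ r > 0, ∃ M, ∀ y ∈ S ∩ Metric.ball x r, ‖fderiv ℝ v y‖ ≤ M :=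
    fun x hx => exists_bound_norm_fderiv_near_of_contDiffOn_closure hS hK hv hx
  choose! r hr M hM using hlocal
  obtain ⟨t, hts, hcover⟩ := hK.elim_nhds_subcover (fun x => Metric.ball x (r x))
    fun x hx => Metric.ball_mem_nhds x (hr x hx)
  obtain ⟨Mt, hMt⟩ := (t.image M).exists_le
  refine ⟨Mt, fun y hy => ?_⟩
  obtain ⟨x, hxt, hyx⟩ := mem_iUnion₂.mp (hcover (subset_closure hy))
  exact (hM x (hts x hxt) y ⟨hy, hyx⟩).trans (hMt _ (Finset.mem_image_of_mem M hxt))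

theorem sq_apply_le_sq_opNorm (L : E →L[ℝ] ℝ) {e : E} (he : ‖e‖ ≤ 1) : L e ^ 2 ≤ ‖L‖ ^ 2 := by
  simpa using pow_le_pow_left₀ (norm_nonneg _) (L.le_opNorm_of_le he) 2

end FDerivBound

section Channel

variable {f₁ f₂ : ℝ → ℝ} {a b : ℝ}

theorem isOpen_chan (hf₁ : Continuous f₁) (hf₂ : Continuous f₂) : IsOpen (chan f₁ f₂ a b) :=
  (isOpen_lt continuous_const continuous_fst).inter <|
    (isOpen_lt continuous_fst continuous_const).inter <|
      (isOpen_lt (hf₁.comp continuous_fst) continuous_snd).inter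
        (isOpen_lt continuous_snd (hf₂.comp continuous_fst))

theorem isBounded_chan (hf₁ : Continuous f₁) (hf₂ : Continuous f₂) :
    Bornology.IsBounded (chan f₁ f₂ a b) := by
  obtain ⟨m, hm⟩ := isCompact_Icc.bddBelow_image (hf₁.continuousOn (s := Icc a b))
  obtain ⟨M, hM⟩ := isCompact_Icc.bddAbove_image (hf₂.continuousOn (s := Icc a b))
  refine ((Metric.isBounded_Icc a b).prod (Metric.isBounded_Icc m M)).subset ?_
  rintro ⟨x₁, x₂⟩ ⟨h₁, h₂, h₃, h₄⟩
  have hx₁ : x₁ ∈ Icc a b := ⟨h₁.le, h₂.le⟩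
  exact ⟨hx₁, (hm ⟨x₁, hx₁, rfl⟩).trans h₃.le, h₄.le.trans (hM ⟨x₁, hx₁, rfl⟩)⟩

theorem mk_mem_closure_chan {x₁ y : ℝ} (hx₁ : x₁ ∈ Ioo a b) (hlt : f₁ x₁ < f₂ x₁)
    (hy : y ∈ Icc (f₁ x₁) (f₂ x₁)) : (x₁, y) ∈ closure (chan f₁ f₂ a b) :=
  map_mem_closure (s := Ioo (f₁ x₁) (f₂ x₁)) (by fun_prop) (by rwa [closure_Ioo hlt.ne])
    fun _ hz => ⟨hx₁.1, hx₁.2, hz.1, hz.2⟩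

theorem indicator_chan_apply (F : ℝ × ℝ → ENNReal) (x₁ x₂ : ℝ) :
    (chan f₁ f₂ a b).indicator F (x₁, x₂) =
      (Ioo a b).indicator
        (fun x₁ => (Ioo (f₁ x₁) (f₂ x₁)).indicator (fun x₂ => F (x₁, x₂)) x₂) x₁ := by
  by_cases h₁ : x₁ ∈ Ioo a b <;> by_cases h₂ : x₂ ∈ Ioo (f₁ x₁) (f₂ x₁) <;>
    simp_all [indicator_apply, chan]

theorem lintegral_chan (hf₁ : Continuous f₁) (hf₂ : Continuous f₂) {F : ℝ × ℝ → ENNReal}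
    (hF : AEMeasurable F (volume.restrict (chan f₁ f₂ a b))) :
    ∫⁻ x in chan f₁ f₂ a b, F x = ∫⁻ x₁ in Ioo a b, ∫⁻ x₂ in Ioo (f₁ x₁) (f₂ x₁), F (x₁, x₂) := by
  have hS := (isOpen_chan (a := a) (b := b) hf₁ hf₂).measurableSet
  have hind := (aemeasurable_indicator_iff hS).mpr hF
  rw [← lintegral_indicator hS, Measure.volume_eq_prod,
    lintegral_prod _ (by rwa [← Measure.volume_eq_prod]), ← lintegral_indicator measurableSet_Ioo]
  congr 1 with x₁
  by_cases h : x₁ ∈ Ioo a b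
  · simp only [indicator_chan_apply, indicator_of_mem h]
    exact lintegral_indicator measurableSet_Ioo _
  · simp [indicator_chan_apply, indicator_of_notMem h]

end Channel

section Gradient

variable {v₁ v₂ : ℝ × ℝ → ℝ}

theorem gsq_nonneg (x : ℝ × ℝ) : 0 ≤ gsq v₁ v₂ x := by
  unfold gsq; positivity

theorem sq_fderiv_snd_add_sq_le_gsq (x : ℝ × ℝ) :
    fderiv ℝ v₁ x (0, 1) ^ 2 + fderiv ℝ v₂ x (0, 1) ^ 2 ≤ gsq v₁ v₂ x := by
  unfold gsq; nlinarith [sq_nonneg (fderiv ℝ v₁ x (1, 0)), sq_nonneg (fderiv ℝ v₂ x (1, 0))]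

theorem gsq_le (x : ℝ × ℝ) : gsq v₁ v₂ x ≤ 2 * (‖fderiv ℝ v₁ x‖ ^ 2 + ‖fderiv ℝ v₂ x‖ ^ 2) := by
  have h₁ : ‖((1 : ℝ), (0 : ℝ))‖ ≤ 1 := by simp
  have h₂ : ‖((0 : ℝ), (1 : ℝ))‖ ≤ 1 := by simp
  unfold gsq
  linarith [sq_apply_le_sq_opNorm (fderiv ℝ v₁ x) h₁, sq_apply_le_sq_opNorm (fderiv ℝ v₁ x) h₂,
    sq_apply_le_sq_opNorm (fderiv ℝ v₂ x) h₁, sq_apply_le_sq_opNorm (fderiv ℝ v₂ x) h₂]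

theorem measurable_gsq : Measurable (gsq v₁ v₂) := by
  unfold gsq; fun_prop

theorem hasDerivAt_fderiv_apply_snd {v : ℝ × ℝ → ℝ} {x₁ y : ℝ} (hv : DifferentiableAt ℝ v (x₁, y)) :
    HasDerivAt (fun t => v (x₁, t)) (fderiv ℝ v (x₁, y) (0, 1)) y :=
  hv.hasFDerivAt.comp_hasDerivAt y ((hasDerivAt_const y x₁).prodMk (hasDerivAt_id y))

end Gradient

section Poincare

variable {f₁ f₂ : ℝ → ℝ} {a b : ℝ} {v₁ v₂ : ℝ × ℝ → ℝ}

theorem setIntegral_chan_le_of_lintegral_slice_le (hf₁ : Continuous f₁) (hf₂ : Continuous f₂)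
    {F G : ℝ × ℝ → ℝ} {K : ℝ} (hK : 0 ≤ K) (hF : IntegrableOn F (chan f₁ f₂ a b))
    (hG : IntegrableOn G (chan f₁ f₂ a b)) (hF0 : ∀ x, 0 ≤ F x) (hG0 : ∀ x, 0 ≤ G x)
    (hslice : ∀ x₁ ∈ Ioo a b, ∫⁻ x₂ in Ioo (f₁ x₁) (f₂ x₁), ENNReal.ofReal (F (x₁, x₂)) ≤
      ENNReal.ofReal K * ∫⁻ x₂ in Ioo (f₁ x₁) (f₂ x₁), ENNReal.ofReal (G (x₁, x₂))) :
    ∫ x in chan f₁ f₂ a b, F x ≤ K * ∫ x in chan f₁ f₂ a b, G x := by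
  rw [← ENNReal.ofReal_le_ofReal_iff (mul_nonneg hK (integral_nonneg hG0)), ENNReal.ofReal_mul hK,
    ofReal_integral_eq_lintegral_ofReal hF (.of_forall hF0),
    ofReal_integral_eq_lintegral_ofReal hG (.of_forall hG0),
    lintegral_chan hf₁ hf₂ hF.aemeasurable.ennreal_ofReal,
    lintegral_chan hf₁ hf₂ hG.aemeasurable.ennreal_ofReal,
    ← lintegral_const_mul' _ _ ENNReal.ofReal_ne_top]
  exact setLIntegral_mono' measurableSet_Ioo hslice

theorem lintegral_slice_le (hS : IsOpen (chan f₁ f₂ a b)) {B M₁ M₂ x₁ : ℝ} (hB : 0 ≤ B)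
    (hx₁ : x₁ ∈ Ioo a b) (hlt : f₁ x₁ < f₂ x₁)
    (hv₁ : ContDiffOn ℝ 1 v₁ (closure (chan f₁ f₂ a b)))
    (hv₂ : ContDiffOn ℝ 1 v₂ (closure (chan f₁ f₂ a b)))
    (hM₁ : ∀ x ∈ chan f₁ f₂ a b, ‖fderiv ℝ v₁ x‖ ≤ M₁)
    (hM₂ : ∀ x ∈ chan f₁ f₂ a b, ‖fderiv ℝ v₂ x‖ ≤ M₂)
    (hflux : ∫ y in f₁ x₁..f₂ x₁, v₁ (x₁, y) = 0)
    (hbc : |v₂ (x₁, f₂ x₁)| ≤ B * |v₁ (x₁, f₂ x₁)|) :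
    ∫⁻ y in Ioo (f₁ x₁) (f₂ x₁), ENNReal.ofReal (v₁ (x₁, y) ^ 2 + v₂ (x₁, y) ^ 2) ≤
      ENNReal.ofReal (2 * (f₂ x₁ - f₁ x₁) ^ 2 * (1 + B) ^ 2) *
        ∫⁻ y in Ioo (f₁ x₁) (f₂ x₁), ENNReal.ofReal (gsq v₁ v₂ (x₁, y)) := by
  have hmem : ∀ y ∈ Ioo (f₁ x₁) (f₂ x₁), (x₁, y) ∈ chan f₁ f₂ a b :=
    fun y hy => ⟨hx₁.1, hx₁.2, hy.1, hy.2⟩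
  have hcont : ∀ v : ℝ × ℝ → ℝ, ContDiffOn ℝ 1 v (closure (chan f₁ f₂ a b)) →
      ContinuousOn (fun y => v (x₁, y)) (Icc (f₁ x₁) (f₂ x₁)) := fun v hv =>
    hv.continuousOn.comp (by fun_prop : Continuous fun y : ℝ => (x₁, y)).continuousOn
      fun y hy => mk_mem_closure_chan hx₁ hlt hy
  have hderiv : ∀ v : ℝ × ℝ → ℝ, ContDiffOn ℝ 1 v (closure (chan f₁ f₂ a b)) →
      ∀ y ∈ Ioo (f₁ x₁) (f₂ x₁), HasDerivAt (fun t => v (x₁, t)) (fderiv ℝ v (x₁, y) (0, 1)) y :=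
    fun v hv y hy => hasDerivAt_fderiv_apply_snd <|
      (hv.contDiffAt (Filter.mem_of_superset (hS.mem_nhds (hmem y hy)) subset_closure))
        |>.differentiableAt one_ne_zero
  have hint : ∀ (v : ℝ × ℝ → ℝ) (M : ℝ), (∀ x ∈ chan f₁ f₂ a b, ‖fderiv ℝ v x‖ ≤ M) →
      IntervalIntegrable (fun y => fderiv ℝ v (x₁, y) (0, 1)) volume (f₁ x₁) (f₂ x₁) ∧
      IntervalIntegrable (fun y => fderiv ℝ v (x₁, y) (0, 1) ^ 2) volume (f₁ x₁) (f₂ x₁) := by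
    intro v M hM
    have hφm : Measurable fun y => fderiv ℝ v (x₁, y) (0, 1) :=
      (measurable_fderiv_apply_const ℝ v (0, 1)).comp measurable_prodMk_left
    have hφ2 : ∀ y ∈ Ioo (f₁ x₁) (f₂ x₁), fderiv ℝ v (x₁, y) (0, 1) ^ 2 ≤ M ^ 2 := fun y hy =>
      (sq_apply_le_sq_opNorm _ (by simp)).trans
        (pow_le_pow_left₀ (norm_nonneg _) (hM _ (hmem y hy)) 2)
    refine ⟨intervalIntegrable_of_abs_le (M := M) hlt.le hφm fun y hy => ?_,
      intervalIntegrable_of_abs_le (M := M ^ 2) hlt.le (hφm.pow_const 2) fun y hy => ?_⟩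
    · exact abs_le_of_sq_le_sq (hφ2 y hy) ((norm_nonneg _).trans (hM _ (hmem y hy)))
    · rw [abs_of_nonneg (sq_nonneg _)]
      exact hφ2 y hy
  obtain ⟨hφ₁, hφ₁2⟩ := hint v₁ M₁ hM₁
  obtain ⟨hφ₂, hφ₂2⟩ := hint v₂ M₂ hM₂
  have hK : 0 ≤ 2 * (f₂ x₁ - f₁ x₁) ^ 2 * (1 + B) ^ 2 := by positivity
  set K := 2 * (f₂ x₁ - f₁ x₁) ^ 2 * (1 + B) ^ 2
  calc ∫⁻ y in Ioo (f₁ x₁) (f₂ x₁), ENNReal.ofReal (v₁ (x₁, y) ^ 2 + v₂ (x₁, y) ^ 2)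
      = ENNReal.ofReal (∫ y in f₁ x₁..f₂ x₁, (v₁ (x₁, y) ^ 2 + v₂ (x₁, y) ^ 2)) :=
        (ofReal_intervalIntegral_eq_lintegral hlt.le
          ((((hcont v₁ hv₁).pow 2).add ((hcont v₂ hv₂).pow 2)).intervalIntegrable_of_Icc hlt.le)
          fun y => add_nonneg (sq_nonneg _) (sq_nonneg _)).symm
    _ ≤ ENNReal.ofReal (K * ∫ y in f₁ x₁..f₂ x₁,
          (fderiv ℝ v₁ (x₁, y) (0, 1) ^ 2 + fderiv ℝ v₂ (x₁, y) (0, 1) ^ 2)) :=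
        ENNReal.ofReal_le_ofReal <| intervalIntegral_sq_add_sq_le hlt hB (hcont v₁ hv₁)
          (hcont v₂ hv₂) (hderiv v₁ hv₁) (hderiv v₂ hv₂) hφ₁ hφ₂ hφ₁2 hφ₂2 hflux hbc
    _ = ENNReal.ofReal K * ∫⁻ y in Ioo (f₁ x₁) (f₂ x₁),
          ENNReal.ofReal (fderiv ℝ v₁ (x₁, y) (0, 1) ^ 2 + fderiv ℝ v₂ (x₁, y) (0, 1) ^ 2) := by
        rw [ENNReal.ofReal_mul hK,
          ofReal_intervalIntegral_eq_lintegral hlt.le (hφ₁2.add hφ₂2) fun y => by positivity]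
    _ ≤ ENNReal.ofReal K * ∫⁻ y in Ioo (f₁ x₁) (f₂ x₁), ENNReal.ofReal (gsq v₁ v₂ (x₁, y)) := by
        gcongr with y
        exact sq_fderiv_snd_add_sq_le_gsq _

theorem setIntegral_chan_sq_le_of_zero_flux (hf₁ : Continuous f₁) (hf₂ : Continuous f₂)
    {Mf B : ℝ} (hB : 0 ≤ B) (hlt : ∀ x₁ ∈ Ioo a b, f₁ x₁ < f₂ x₁)
    (hMf : ∀ x₁ ∈ Ioo a b, f₂ x₁ - f₁ x₁ ≤ Mf)
    (hv₁ : ContDiffOn ℝ 1 v₁ (closure (chan f₁ f₂ a b)))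
    (hv₂ : ContDiffOn ℝ 1 v₂ (closure (chan f₁ f₂ a b)))
    (hflux : ∀ x₁ ∈ Ioo a b, ∫ x₂ in f₁ x₁..f₂ x₁, v₁ (x₁, x₂) = 0)
    (hbc : ∀ x₁ ∈ Ioo a b, |v₂ (x₁, f₂ x₁)| ≤ B * |v₁ (x₁, f₂ x₁)|) :
    ∫ x in chan f₁ f₂ a b, (v₁ x ^ 2 + v₂ x ^ 2) ≤
      2 * Mf ^ 2 * (1 + B) ^ 2 * ∫ x in chan f₁ f₂ a b, gsq v₁ v₂ x := by
  have hS : IsOpen (chan f₁ f₂ a b) := isOpen_chan hf₁ hf₂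
  have hbdd : Bornology.IsBounded (chan f₁ f₂ a b) := isBounded_chan hf₁ hf₂
  have hK : IsCompact (closure (chan f₁ f₂ a b)) := hbdd.isCompact_closure
  obtain ⟨M₁, hM₁⟩ := exists_bound_norm_fderiv_of_contDiffOn_closure hS hK hv₁
  obtain ⟨M₂, hM₂⟩ := exists_bound_norm_fderiv_of_contDiffOn_closure hS hK hv₂
  have hvint : IntegrableOn (fun x => v₁ x ^ 2 + v₂ x ^ 2) (chan f₁ f₂ a b) :=
    (((hv₁.continuousOn.pow 2).add (hv₂.continuousOn.pow 2)).integrableOn_compact hK).mono_set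
      subset_closure
  have hgint : IntegrableOn (gsq v₁ v₂) (chan f₁ f₂ a b) := by
    refine Measure.integrableOn_of_bounded hbdd.measure_lt_top.ne
      measurable_gsq.aestronglyMeasurable (M := 2 * (M₁ ^ 2 + M₂ ^ 2))
      ((ae_restrict_iff' hS.measurableSet).2 (.of_forall fun x hx => ?_))
    rw [Real.norm_of_nonneg (gsq_nonneg x)]
    refine (gsq_le x).trans ?_
    gcongr
    exacts [hM₁ x hx, hM₂ x hx]
  refine setIntegral_chan_le_of_lintegral_slice_le hf₁ hf₂ (by positivity) hvint hgint
    (fun x => by positivity) gsq_nonneg fun x₁ hx₁ => ?_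
  refine (lintegral_slice_le hS hB hx₁ (hlt x₁ hx₁) hv₁ hv₂ hM₁ hM₂ (hflux x₁ hx₁)
    (hbc x₁ hx₁)).trans ?_
  gcongr
  · exact (sub_pos.2 (hlt x₁ hx₁)).le
  · exact hMf x₁ hx₁

end Poincare

/-- the Poincaré inequality
`‖v‖_{L²(Ω_{a,b})} ≤ C ‖f‖_{L^∞(a,b)} (1 + ‖f₂'‖_{L^∞(a,b)}) ‖∇v‖_{L²(Ω_{a,b})}`
(stated in squared form, and with the `L^∞` norms expressed through arbitrary upper bounds
`Mf` of `f` and `B₂` of `|f₂'|` on `(a,b)`). -/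
theorem stmt_1 :
    ∃ C : ℝ, 0 < C ∧
      ∀ (f₁ f₂ : ℝ → ℝ) (d β : ℝ),
        ContDiff ℝ (⊤ : ℕ∞) f₁ → ContDiff ℝ (⊤ : ℕ∞) f₂ →
        0 < d → (∀ x₁ : ℝ, d ≤ f₂ x₁ - f₁ x₁) →
        (∀ x₁ : ℝ, |deriv f₁ x₁| ≤ β) → (∀ x₁ : ℝ, |deriv f₂ x₁| ≤ β) →
        ∀ a b : ℝ, a < b →
        ∀ Mf B₂ : ℝ,
          (∀ x₁ ∈ Ioo a b, f₂ x₁ - f₁ x₁ ≤ Mf) →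
          (∀ x₁ ∈ Ioo a b, |deriv f₂ x₁| ≤ B₂) →
          ∀ v₁ v₂ : ℝ × ℝ → ℝ,
            ContDiffOn ℝ 1 v₁ (closure (chan f₁ f₂ a b)) →
            ContDiffOn ℝ 1 v₂ (closure (chan f₁ f₂ a b)) →
            -- zero flux
            (∀ x₁ ∈ Ioo a b, (∫ x₂ in (f₁ x₁)..(f₂ x₁), v₁ (x₁, x₂)) = 0) →
            -- `v·n = 0` on `∂Ω_{a,b} ∩ ∂Ω`
            (∀ x₁ ∈ Ioo a b, v₂ (x₁, f₁ x₁) = deriv f₁ x₁ * v₁ (x₁, f₁ x₁)) →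
            (∀ x₁ ∈ Ioo a b, v₂ (x₁, f₂ x₁) = deriv f₂ x₁ * v₁ (x₁, f₂ x₁)) →
            (∫ x in chan f₁ f₂ a b, (v₁ x ^ 2 + v₂ x ^ 2)) ≤
              (C * Mf * (1 + B₂)) ^ 2 * ∫ x in chan f₁ f₂ a b, gsq v₁ v₂ x := by
  refine ⟨2, two_pos, ?_⟩
  intro f₁ f₂ d β hf₁ hf₂ hd hgap _ _ a b hab Mf B₂ hMf hB₂ v₁ v₂ hv₁ hv₂ hflux _ hbc₂
  have hB₂0 : 0 ≤ B₂ :=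
    (abs_nonneg _).trans (hB₂ _ ⟨left_lt_add_div_two.2 hab, add_div_two_lt_right.2 hab⟩)
  have hbc : ∀ x₁ ∈ Ioo a b, |v₂ (x₁, f₂ x₁)| ≤ B₂ * |v₁ (x₁, f₂ x₁)| := fun x₁ hx₁ => by
    rw [hbc₂ x₁ hx₁, abs_mul]
    exact mul_le_mul_of_nonneg_right (hB₂ x₁ hx₁) (abs_nonneg _)
  calc ∫ x in chan f₁ f₂ a b, (v₁ x ^ 2 + v₂ x ^ 2)
      ≤ 2 * Mf ^ 2 * (1 + B₂) ^ 2 * ∫ x in chan f₁ f₂ a b, gsq v₁ v₂ x :=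
        setIntegral_chan_sq_le_of_zero_flux hf₁.continuous hf₂.continuous hB₂0
          (fun x₁ _ => by linarith [hgap x₁]) hMf hv₁ hv₂ hflux hbc
    _ ≤ (2 * Mf * (1 + B₂)) ^ 2 * ∫ x in chan f₁ f₂ a b, gsq v₁ v₂ x := by
        have : 0 ≤ ∫ x in chan f₁ f₂ a b, gsq v₁ v₂ x := integral_nonneg fun x => gsq_nonneg x
        gcongr
        nlinarith [sq_nonneg (Mf * (1 + B₂))]
end

section
/- Suppose in addition that γ := max_{i=1,2} sup_{x₁∈ℝ} |f_i''(x₁) f(x₁)| < ∞. Then there exists a constant C(ε,γ) > 0 depending only on ε, γ, μ, β such that for all a < b: ∫_{Ω_{a,b}} ( |∇g|² + |g|⁴ ) dx ≤ C(ε,γ) (Φ² + Φ⁴) ∫_a^b f(x₁)^{−3} dx₁. -/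
open MeasureTheory Set

/-- The stream function `G` of the flux carrier. -/
noncomputable def Gfun (μ f₁ f₂ : ℝ → ℝ) (ε Φ : ℝ) (x : ℝ × ℝ) : ℝ :=
  if (f₁ x.1 + f₂ x.1) / 2 < x.2 then
    Φ * μ (1 + ε * Real.log ((f₂ x.1 - x.2) / (x.2 - (f₁ x.1 + f₂ x.1) / 2)))
  else 0

/-- The first component `g₁ = ∂_{x₂} G` of the flux carrier. -/
noncomputable def gfun₁ (μ f₁ f₂ : ℝ → ℝ) (ε Φ : ℝ) (x : ℝ × ℝ) : ℝ :=
  fderiv ℝ (Gfun μ f₁ f₂ ε Φ) x (0, 1)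

/-- The second component `g₂ = −∂_{x₁} G` of the flux carrier. -/
noncomputable def gfun₂ (μ f₁ f₂ : ℝ → ℝ) (ε Φ : ℝ) (x : ℝ × ℝ) : ℝ :=
  -(fderiv ℝ (Gfun μ f₁ f₂ ε Φ) x (1, 0))

/-!
Write `P = x₂ - f̄(x₁)` (`heightAbove`), `Q = f₂(x₁) - x₂` (`depthBelow`) and
`h = 1 + ε log (Q / P)` (`cutArg`), so that `G = Φ μ(h)` where `P, Q > 0`. Since `μ` is constant
off `(0, 1)`, `g` and `∇g` vanish unless `0 < h < 1`; this forces `Q < P`, i.e. `x` lies in the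
upper quarter `(f₁ + 3 f₂) / 4 < x₂ < f₂` of the channel, where `P > f / 4`, and `P / Q ≤ e^{1/ε}`.
Hence `1/P, 1/Q ≤ D := 4 e^{1/ε} / f` there. Now `g = Φ μ'(h) (∂₂h, -∂₁h)` and `∂ᵢgⱼ` is `Φ` times
a combination of `μ'(h) ∂²h` and `μ''(h) ∂h ∂h`; as `|fᵢ'| ≤ β` and `|fᵢ''| ≤ γ / f`, the first
derivatives of `h` are `O(D)` and the second ones `O(D²)`. So `|∇g|² + |g|⁴ ≲ (Φ² + Φ⁴) f⁻⁴` on the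
upper quarter and `0` elsewhere, and integrating over vertical slices of length `f / 4` gives the
bound.
-/

open Filter Topology

lemma abs_mul_le_of_abs_le {a b A B : ℝ} (ha : |a| ≤ A) (hb : |b| ≤ B) : |a * b| ≤ A * B :=
  (abs_mul a b).trans_le (mul_le_mul ha hb (abs_nonneg b) ((abs_nonneg a).trans ha))

lemma abs_sq_le_of_abs_le {a A : ℝ} (ha : |a| ≤ A) : |a ^ 2| ≤ A ^ 2 := by
  simpa only [sq] using abs_mul_le_of_abs_le ha ha

lemma sq_le_sq_of_abs_le {a b : ℝ} (h : |a| ≤ b) : a ^ 2 ≤ b ^ 2 :=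
  sq_le_sq' (abs_le.1 h).1 (abs_le.1 h).2

lemma abs_le_mul_of_abs_mul_le {a w K D : ℝ} (h : |a * w| ≤ K) (hw : 0 < w) (hwD : w⁻¹ ≤ D) :
    |a| ≤ K * D := by
  have hK : 0 ≤ K := (abs_nonneg _).trans h
  rw [abs_mul, abs_of_pos hw, ← le_div_iff₀ hw, div_eq_mul_inv] at h
  exact h.trans (mul_le_mul_of_nonneg_left hwD hK)

lemma eqOn_deriv_zero_of_eqOn_const {f : ℝ → ℝ} {s : Set ℝ} {c : ℝ} (hs : UniqueDiffOn ℝ s)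
    (hd : Differentiable ℝ f) (hf : EqOn f (fun _ => c) s) : EqOn (deriv f) (fun _ => 0) s :=
  fun x hx => by
    rw [← (hd x).derivWithin (hs x hx), derivWithin_congr hf (hf hx)]
    exact congrFun (derivWithin_const (s := s) c) x

lemma derivs_eq_zero_of_eqOn_const {f : ℝ → ℝ} {s : Set ℝ} {c t : ℝ} (hf : ContDiff ℝ 2 f)
    (hs : UniqueDiffOn ℝ s) (h : EqOn f (fun _ => c) s) (ht : t ∈ s) :
    deriv f t = 0 ∧ deriv (deriv f) t = 0 := by
  have h' := eqOn_deriv_zero_of_eqOn_const hs (hf.differentiable two_ne_zero) h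
  exact ⟨h' ht, eqOn_deriv_zero_of_eqOn_const hs hf.differentiable_deriv_two h' ht⟩

lemma exists_abs_deriv_le_of_cutoff {μ : ℝ → ℝ} (hμ : ContDiff ℝ 2 μ)
    (hμ₁ : ∀ t : ℝ, t ≤ 0 → μ t = 1) (hμ₀ : ∀ t : ℝ, 1 ≤ t → μ t = 0) :
    ∃ M, 1 ≤ M ∧ ∀ t, |deriv μ t| ≤ M ∧ |deriv (deriv μ) t| ≤ M := by
  have hsupp : ∀ t ∉ Icc (0 : ℝ) 1, deriv μ t = 0 ∧ deriv (deriv μ) t = 0 := fun t ht => by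
    rcases le_or_gt t 0 with ht0 | ht0
    · exact derivs_eq_zero_of_eqOn_const hμ (uniqueDiffOn_Iic 0) hμ₁ ht0
    · exact derivs_eq_zero_of_eqOn_const hμ (uniqueDiffOn_Ici 1) hμ₀
        (not_lt.1 fun h => ht ⟨ht0.le, h.le⟩)
  obtain ⟨M₁, hM₁⟩ := (hμ.continuous_deriv one_le_two).bounded_above_of_compact_support
    (HasCompactSupport.intro isCompact_Icc fun t ht => (hsupp t ht).1)
  obtain ⟨M₂, hM₂⟩ := (hμ.deriv' (n := 1)).continuous_deriv_one.bounded_above_of_compact_support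
    (HasCompactSupport.intro isCompact_Icc fun t ht => (hsupp t ht).2)
  exact ⟨max 1 (max M₁ M₂), le_max_left _ _, fun t =>
    ⟨(hM₁ t).trans ((le_max_left _ _).trans (le_max_right _ _)),
     (hM₂ t).trans ((le_max_right _ _).trans (le_max_right _ _))⟩⟩

noncomputable def linForm₂ (a b : ℝ) : ℝ × ℝ →L[ℝ] ℝ :=
  a • ContinuousLinearMap.fst ℝ ℝ ℝ + b • ContinuousLinearMap.snd ℝ ℝ ℝ

@[simp] lemma linForm₂_apply (a b : ℝ) (v : ℝ × ℝ) : linForm₂ a b v = a * v.1 + b * v.2 := rfl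

lemma hasFDerivAt_comp_fst {φ : ℝ → ℝ} {x : ℝ × ℝ} (hφ : DifferentiableAt ℝ φ x.1) :
    HasFDerivAt (fun y : ℝ × ℝ => φ y.1) (linForm₂ (deriv φ x.1) 0) x :=
  (hφ.hasDerivAt.comp_hasFDerivAt (f := Prod.fst) x hasFDerivAt_fst).congr_fderiv
    (by ext <;> simp)

section CutArg

variable (m u : ℝ → ℝ) (ε : ℝ)

def heightAbove (x : ℝ × ℝ) : ℝ := x.2 - m x.1

def depthBelow (x : ℝ × ℝ) : ℝ := u x.1 - x.2

/-- Only meaningful where `heightAbove m x` and `depthBelow u x` are positive: elsewhere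
`Real.log` takes junk values. -/
noncomputable def cutArg (x : ℝ × ℝ) : ℝ :=
  1 + ε * (Real.log (depthBelow u x) - Real.log (heightAbove m x))

noncomputable def cutArgD₁ (x : ℝ × ℝ) : ℝ :=
  ε * (deriv u x.1 * (depthBelow u x)⁻¹ + deriv m x.1 * (heightAbove m x)⁻¹)

noncomputable def cutArgD₂ (x : ℝ × ℝ) : ℝ :=
  -ε * ((depthBelow u x)⁻¹ + (heightAbove m x)⁻¹)

noncomputable def cutArgD₁₁ (x : ℝ × ℝ) : ℝ :=
  ε * (deriv (deriv u) x.1 * (depthBelow u x)⁻¹ - deriv u x.1 ^ 2 * (depthBelow u x)⁻¹ ^ 2 +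
    deriv (deriv m) x.1 * (heightAbove m x)⁻¹ + deriv m x.1 ^ 2 * (heightAbove m x)⁻¹ ^ 2)

noncomputable def cutArgD₁₂ (x : ℝ × ℝ) : ℝ :=
  ε * (deriv u x.1 * (depthBelow u x)⁻¹ ^ 2 - deriv m x.1 * (heightAbove m x)⁻¹ ^ 2)

noncomputable def cutArgD₂₂ (x : ℝ × ℝ) : ℝ :=
  ε * ((heightAbove m x)⁻¹ ^ 2 - (depthBelow u x)⁻¹ ^ 2)

variable {m u ε} {x : ℝ × ℝ} {K D : ℝ}

lemma hasFDerivAt_heightAbove (hm : DifferentiableAt ℝ m x.1) :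
    HasFDerivAt (heightAbove m) (linForm₂ (-deriv m x.1) 1) x :=
  (hasFDerivAt_snd.sub (hasFDerivAt_comp_fst hm)).congr_fderiv (by ext <;> simp [linForm₂])

lemma hasFDerivAt_depthBelow (hu : DifferentiableAt ℝ u x.1) :
    HasFDerivAt (depthBelow u) (linForm₂ (deriv u x.1) (-1)) x :=
  ((hasFDerivAt_comp_fst hu).sub hasFDerivAt_snd).congr_fderiv (by ext <;> simp [linForm₂])

lemma hasFDerivAt_inv_heightAbove (hm : DifferentiableAt ℝ m x.1) (hP : heightAbove m x ≠ 0) :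
    HasFDerivAt (fun y => (heightAbove m y)⁻¹)
      (linForm₂ (deriv m x.1 * (heightAbove m x)⁻¹ ^ 2) (-(heightAbove m x)⁻¹ ^ 2)) x := by
  refine (hasDerivAt_inv hP).comp_hasFDerivAt x (hasFDerivAt_heightAbove hm) |>.congr_fderiv ?_
  ext <;> simp [linForm₂]
  ring

lemma hasFDerivAt_inv_depthBelow (hu : DifferentiableAt ℝ u x.1) (hQ : depthBelow u x ≠ 0) :
    HasFDerivAt (fun y => (depthBelow u y)⁻¹)
      (linForm₂ (-deriv u x.1 * (depthBelow u x)⁻¹ ^ 2) ((depthBelow u x)⁻¹ ^ 2)) x := by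
  refine (hasDerivAt_inv hQ).comp_hasFDerivAt x (hasFDerivAt_depthBelow hu) |>.congr_fderiv ?_
  ext <;> simp [linForm₂]
  ring

lemma hasFDerivAt_cutArg (hm : DifferentiableAt ℝ m x.1) (hu : DifferentiableAt ℝ u x.1)
    (hP : heightAbove m x ≠ 0) (hQ : depthBelow u x ≠ 0) :
    HasFDerivAt (cutArg m u ε) (linForm₂ (cutArgD₁ m u ε x) (cutArgD₂ m u ε x)) x := by
  refine ((((hasFDerivAt_depthBelow hu).log hQ).sub
    ((hasFDerivAt_heightAbove hm).log hP)).const_mul ε).const_add 1 |>.congr_fderiv ?_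
  ext <;> simp [linForm₂, cutArgD₁, cutArgD₂] <;> ring

lemma hasFDerivAt_cutArgD₁ (hm : DifferentiableAt ℝ m x.1) (hu : DifferentiableAt ℝ u x.1)
    (hm' : DifferentiableAt ℝ (deriv m) x.1) (hu' : DifferentiableAt ℝ (deriv u) x.1)
    (hP : heightAbove m x ≠ 0) (hQ : depthBelow u x ≠ 0) :
    HasFDerivAt (cutArgD₁ m u ε) (linForm₂ (cutArgD₁₁ m u ε x) (cutArgD₁₂ m u ε x)) x := by
  refine (((hasFDerivAt_comp_fst hu').mul (hasFDerivAt_inv_depthBelow hu hQ)).add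
    ((hasFDerivAt_comp_fst hm').mul (hasFDerivAt_inv_heightAbove hm hP))).const_mul ε
    |>.congr_fderiv ?_
  ext <;> simp [linForm₂, cutArgD₁₁, cutArgD₁₂] <;> ring

lemma hasFDerivAt_cutArgD₂ (hm : DifferentiableAt ℝ m x.1) (hu : DifferentiableAt ℝ u x.1)
    (hP : heightAbove m x ≠ 0) (hQ : depthBelow u x ≠ 0) :
    HasFDerivAt (cutArgD₂ m u ε) (linForm₂ (cutArgD₁₂ m u ε x) (cutArgD₂₂ m u ε x)) x := by
  refine ((hasFDerivAt_inv_depthBelow hu hQ).add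
    (hasFDerivAt_inv_heightAbove hm hP)).const_mul (-ε) |>.congr_fderiv ?_
  ext <;> simp [linForm₂, cutArgD₁₂, cutArgD₂₂] <;> ring

lemma abs_cutArgD₁_le (hε : |ε| ≤ 1) (hm : |deriv m x.1| ≤ K) (hu : |deriv u x.1| ≤ K)
    (hP : |(heightAbove m x)⁻¹| ≤ D) (hQ : |(depthBelow u x)⁻¹| ≤ D) :
    |cutArgD₁ m u ε x| ≤ 2 * K * D := by
  refine (abs_mul_le_of_abs_le hε ((abs_add_le _ _).trans
    (add_le_add (abs_mul_le_of_abs_le hu hQ) (abs_mul_le_of_abs_le hm hP)))).trans_eq ?_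
  ring

lemma abs_cutArgD₂_le (hK : 1 ≤ K) (hε : |ε| ≤ 1) (hP : |(heightAbove m x)⁻¹| ≤ D)
    (hQ : |(depthBelow u x)⁻¹| ≤ D) : |cutArgD₂ m u ε x| ≤ 2 * K * D := by
  have hD : 0 ≤ D := (abs_nonneg _).trans hP
  have := abs_mul_le_of_abs_le (abs_neg ε ▸ hε) ((abs_add_le _ _).trans (add_le_add hQ hP))
  rw [cutArgD₂]
  nlinarith

lemma abs_cutArgD₁₁_le (hK : 1 ≤ K) (hε : |ε| ≤ 1) (hm : |deriv m x.1| ≤ K)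
    (hu : |deriv u x.1| ≤ K) (hm' : |deriv (deriv m) x.1| ≤ K * D)
    (hu' : |deriv (deriv u) x.1| ≤ K * D) (hP : |(heightAbove m x)⁻¹| ≤ D)
    (hQ : |(depthBelow u x)⁻¹| ≤ D) : |cutArgD₁₁ m u ε x| ≤ 4 * K ^ 2 * D ^ 2 := by
  have hD : 0 ≤ D := (abs_nonneg _).trans hP
  have := abs_mul_le_of_abs_le hε ((abs_add_le _ _).trans (add_le_add
    ((abs_add_le _ _).trans (add_le_add ((abs_sub _ _).trans (add_le_add
      (abs_mul_le_of_abs_le hu' hQ)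
      (abs_mul_le_of_abs_le (abs_sq_le_of_abs_le hu) (abs_sq_le_of_abs_le hQ))))
      (abs_mul_le_of_abs_le hm' hP)))
    (abs_mul_le_of_abs_le (abs_sq_le_of_abs_le hm) (abs_sq_le_of_abs_le hP))))
  rw [cutArgD₁₁]
  nlinarith [mul_nonneg (mul_nonneg (sub_nonneg.2 hK) (by linarith : (0:ℝ) ≤ K)) (sq_nonneg D)]

lemma abs_cutArgD₁₂_le (hK : 1 ≤ K) (hε : |ε| ≤ 1) (hm : |deriv m x.1| ≤ K)
    (hu : |deriv u x.1| ≤ K) (hP : |(heightAbove m x)⁻¹| ≤ D)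
    (hQ : |(depthBelow u x)⁻¹| ≤ D) : |cutArgD₁₂ m u ε x| ≤ 4 * K ^ 2 * D ^ 2 := by
  have := abs_mul_le_of_abs_le hε ((abs_sub _ _).trans (add_le_add
    (abs_mul_le_of_abs_le hu (abs_sq_le_of_abs_le hQ))
    (abs_mul_le_of_abs_le hm (abs_sq_le_of_abs_le hP))))
  rw [cutArgD₁₂]
  nlinarith [mul_nonneg (mul_nonneg (sub_nonneg.2 hK) (by linarith : (0:ℝ) ≤ K)) (sq_nonneg D),
    sq_nonneg D]

lemma abs_cutArgD₂₂_le (hK : 1 ≤ K) (hε : |ε| ≤ 1) (hP : |(heightAbove m x)⁻¹| ≤ D)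
    (hQ : |(depthBelow u x)⁻¹| ≤ D) : |cutArgD₂₂ m u ε x| ≤ 4 * K ^ 2 * D ^ 2 := by
  have := abs_mul_le_of_abs_le hε ((abs_sub _ _).trans
    (add_le_add (abs_sq_le_of_abs_le hP) (abs_sq_le_of_abs_le hQ)))
  rw [cutArgD₂₂]
  nlinarith [mul_nonneg (mul_nonneg (sub_nonneg.2 hK) (by linarith : (0:ℝ) ≤ K)) (sq_nonneg D),
    sq_nonneg D]

lemma one_le_cutArg (hε : 0 < ε) (hP : 0 < heightAbove m x)
    (hPQ : heightAbove m x ≤ depthBelow u x) :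
    1 ≤ cutArg m u ε x := by
  have := Real.log_le_log hP hPQ
  rw [cutArg]; nlinarith

lemma inv_depthBelow_le (hε : 0 < ε) (hP : 0 < heightAbove m x) (hQ : 0 < depthBelow u x)
    (h : 0 < cutArg m u ε x) :
    (depthBelow u x)⁻¹ ≤ Real.exp ε⁻¹ * (heightAbove m x)⁻¹ := by
  have hratio : heightAbove m x / depthBelow u x ≤ Real.exp ε⁻¹ := by
    rw [← Real.log_le_iff_le_exp (div_pos hP hQ), Real.log_div hP.ne' hQ.ne', ← one_div,
      le_div_iff₀' hε]
    rw [cutArg] at h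
    linarith
  calc (depthBelow u x)⁻¹ = heightAbove m x / depthBelow u x * (heightAbove m x)⁻¹ := by
        field_simp
    _ ≤ Real.exp ε⁻¹ * (heightAbove m x)⁻¹ := by gcongr

end CutArg

noncomputable def midline (f₁ f₂ : ℝ → ℝ) (t : ℝ) : ℝ := (f₁ t + f₂ t) / 2

lemma continuous_midline {f₁ f₂ : ℝ → ℝ} (hf₁ : Continuous f₁) (hf₂ : Continuous f₂) :
    Continuous (midline f₁ f₂) :=
  (hf₁.add hf₂).div_const 2

lemma differentiable_midline {f₁ f₂ : ℝ → ℝ} (hf₁ : Differentiable ℝ f₁)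
    (hf₂ : Differentiable ℝ f₂) : Differentiable ℝ (midline f₁ f₂) :=
  (hf₁.add hf₂).div_const 2

lemma deriv_midline {f₁ f₂ : ℝ → ℝ} (hf₁ : Differentiable ℝ f₁) (hf₂ : Differentiable ℝ f₂) :
    deriv (midline f₁ f₂) = midline (deriv f₁) (deriv f₂) := by
  funext t
  exact (((hf₁ t).hasDerivAt.add (hf₂ t).hasDerivAt).div_const 2).deriv

lemma abs_midline_le {f₁ f₂ : ℝ → ℝ} {t c : ℝ} (h₁ : |f₁ t| ≤ c) (h₂ : |f₂ t| ≤ c) :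
    |midline f₁ f₂ t| ≤ c := by
  rw [midline, abs_div, abs_two]
  linarith [abs_add_le (f₁ t) (f₂ t)]

lemma continuous_heightAbove {m : ℝ → ℝ} (hm : Continuous m) : Continuous (heightAbove m) :=
  continuous_snd.sub (hm.comp continuous_fst)

lemma continuous_depthBelow {u : ℝ → ℝ} (hu : Continuous u) : Continuous (depthBelow u) :=
  (hu.comp continuous_fst).sub continuous_snd

lemma chan_eq_regionBetween (f₁ f₂ : ℝ → ℝ) (a b : ℝ) :
    chan f₁ f₂ a b = regionBetween f₁ f₂ (Ioo a b) := by
  ext x; simp [chan, regionBetween, and_assoc]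

lemma heightAbove_midline_add_depthBelow (f₁ f₂ : ℝ → ℝ) (x : ℝ × ℝ) :
    heightAbove (midline f₁ f₂) x + depthBelow f₂ x = (f₂ x.1 - f₁ x.1) / 2 := by
  simp only [heightAbove, depthBelow, midline]; ring

lemma depthBelow_lt_heightAbove_iff {f₁ f₂ : ℝ → ℝ} {x : ℝ × ℝ} :
    depthBelow f₂ x < heightAbove (midline f₁ f₂) x ↔ midline (midline f₁ f₂) f₂ x.1 < x.2 := by
  simp only [depthBelow, heightAbove, midline]
  constructor <;> intro h <;> linarith

section StreamFunction

variable {μ f₁ f₂ : ℝ → ℝ} {ε Φ : ℝ} {x : ℝ × ℝ}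

lemma Gfun_eq_zero_of_lt (hε : 0 < ε) (hμ₀ : ∀ t : ℝ, 1 ≤ t → μ t = 0)
    (hx : heightAbove (midline f₁ f₂) x < depthBelow f₂ x) : Gfun μ f₁ f₂ ε Φ x = 0 := by
  rw [Gfun]
  split_ifs with hP
  · have hlog : 0 < Real.log ((f₂ x.1 - x.2) / (x.2 - (f₁ x.1 + f₂ x.1) / 2)) :=
      Real.log_pos ((one_lt_div (sub_pos.2 hP)).2 hx)
    rw [hμ₀ _ (le_add_of_nonneg_right (mul_pos hε hlog).le), mul_zero]
  · rfl

lemma Gfun_eq_of_pos (hP : 0 < heightAbove (midline f₁ f₂) x) (hQ : 0 < depthBelow f₂ x) :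
    Gfun μ f₁ f₂ ε Φ x = Φ * μ (cutArg (midline f₁ f₂) f₂ ε x) := by
  rw [cutArg, ← Real.log_div hQ.ne' hP.ne']
  exact if_pos (sub_pos.1 hP)

lemma gfun_eventuallyEq_zero (hf₁ : Continuous f₁) (hf₂ : Continuous f₂) (hε : 0 < ε)
    (hμ₀ : ∀ t : ℝ, 1 ≤ t → μ t = 0) (hx : heightAbove (midline f₁ f₂) x < depthBelow f₂ x) :
    gfun₁ μ f₁ f₂ ε Φ =ᶠ[𝓝 x] 0 ∧ gfun₂ μ f₁ f₂ ε Φ =ᶠ[𝓝 x] 0 := by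
  have hopen : IsOpen {y | heightAbove (midline f₁ f₂) y < depthBelow f₂ y} :=
    isOpen_lt (continuous_heightAbove (continuous_midline hf₁ hf₂)) (continuous_depthBelow hf₂)
  have hG : ∀ y ∈ {y | heightAbove (midline f₁ f₂) y < depthBelow f₂ y},
      fderiv ℝ (Gfun μ f₁ f₂ ε Φ) y = 0 := fun y hy => by
    have hGy : Gfun μ f₁ f₂ ε Φ =ᶠ[𝓝 y] fun _ => 0 :=
      eventually_of_mem (hopen.mem_nhds hy) fun z hz => Gfun_eq_zero_of_lt hε hμ₀ hz
    rw [hGy.fderiv_eq, fderiv_const_apply]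
  constructor <;> filter_upwards [hopen.mem_nhds hx] with y hy <;> simp [gfun₁, gfun₂, hG y hy]

lemma isOpen_pos_heightAbove_depthBelow (hf₁ : Continuous f₁) (hf₂ : Continuous f₂) :
    IsOpen {y | 0 < heightAbove (midline f₁ f₂) y ∧ 0 < depthBelow f₂ y} :=
  (isOpen_lt continuous_const (continuous_heightAbove (continuous_midline hf₁ hf₂))).inter
    (isOpen_lt continuous_const (continuous_depthBelow hf₂))

lemma hasFDerivAt_Gfun (hμ : Differentiable ℝ μ) (hf₁ : Differentiable ℝ f₁)
    (hf₂ : Differentiable ℝ f₂) (hP : 0 < heightAbove (midline f₁ f₂) x)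
    (hQ : 0 < depthBelow f₂ x) :
    HasFDerivAt (Gfun μ f₁ f₂ ε Φ)
      (linForm₂ (Φ * (deriv μ (cutArg (midline f₁ f₂) f₂ ε x) * cutArgD₁ (midline f₁ f₂) f₂ ε x))
        (Φ * (deriv μ (cutArg (midline f₁ f₂) f₂ ε x) * cutArgD₂ (midline f₁ f₂) f₂ ε x))) x := by
  have hm := differentiable_midline hf₁ hf₂
  have hU := isOpen_pos_heightAbove_depthBelow hf₁.continuous hf₂.continuous
  refine ((((hμ _).hasDerivAt.comp_hasFDerivAt x
    (hasFDerivAt_cutArg (hm _) (hf₂ _) hP.ne' hQ.ne')).const_mul Φ).congr_of_eventuallyEq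
      (eventually_of_mem (hU.mem_nhds ⟨hP, hQ⟩) fun y hy => Gfun_eq_of_pos hy.1 hy.2))
    |>.congr_fderiv ?_
  ext <;> simp

lemma gfun₁_eq (hμ : Differentiable ℝ μ) (hf₁ : Differentiable ℝ f₁)
    (hf₂ : Differentiable ℝ f₂) (hP : 0 < heightAbove (midline f₁ f₂) x)
    (hQ : 0 < depthBelow f₂ x) :
    gfun₁ μ f₁ f₂ ε Φ x =
      Φ * (deriv μ (cutArg (midline f₁ f₂) f₂ ε x) * cutArgD₂ (midline f₁ f₂) f₂ ε x) := by
  simp [gfun₁, (hasFDerivAt_Gfun hμ hf₁ hf₂ hP hQ).fderiv]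

lemma gfun₂_eq (hμ : Differentiable ℝ μ) (hf₁ : Differentiable ℝ f₁)
    (hf₂ : Differentiable ℝ f₂) (hP : 0 < heightAbove (midline f₁ f₂) x)
    (hQ : 0 < depthBelow f₂ x) :
    gfun₂ μ f₁ f₂ ε Φ x =
      -(Φ * (deriv μ (cutArg (midline f₁ f₂) f₂ ε x) * cutArgD₁ (midline f₁ f₂) f₂ ε x)) := by
  simp [gfun₂, (hasFDerivAt_Gfun hμ hf₁ hf₂ hP hQ).fderiv]

lemma hasFDerivAt_gfun₁ (hμ : ContDiff ℝ 2 μ) (hf₁ : Differentiable ℝ f₁)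
    (hf₂ : Differentiable ℝ f₂)
    (hP : 0 < heightAbove (midline f₁ f₂) x) (hQ : 0 < depthBelow f₂ x) :
    HasFDerivAt (gfun₁ μ f₁ f₂ ε Φ)
      (linForm₂
        (Φ * (deriv μ (cutArg (midline f₁ f₂) f₂ ε x) * cutArgD₁₂ (midline f₁ f₂) f₂ ε x +
          deriv (deriv μ) (cutArg (midline f₁ f₂) f₂ ε x) * cutArgD₁ (midline f₁ f₂) f₂ ε x *
            cutArgD₂ (midline f₁ f₂) f₂ ε x))
        (Φ * (deriv μ (cutArg (midline f₁ f₂) f₂ ε x) * cutArgD₂₂ (midline f₁ f₂) f₂ ε x +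
          deriv (deriv μ) (cutArg (midline f₁ f₂) f₂ ε x) * cutArgD₂ (midline f₁ f₂) f₂ ε x *
            cutArgD₂ (midline f₁ f₂) f₂ ε x))) x := by
  have hm := differentiable_midline hf₁ hf₂
  have hU := isOpen_pos_heightAbove_depthBelow hf₁.continuous hf₂.continuous
  have hh := hasFDerivAt_cutArg (ε := ε) (hm _) (hf₂ _) hP.ne' hQ.ne'
  refine (((hμ.differentiable_deriv_two _).hasDerivAt.comp_hasFDerivAt x hh).mul
    (hasFDerivAt_cutArgD₂ (ε := ε) (hm _) (hf₂ _) hP.ne' hQ.ne') |>.const_mul Φ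
    |>.congr_of_eventuallyEq (eventually_of_mem (hU.mem_nhds ⟨hP, hQ⟩) fun y hy =>
      gfun₁_eq (hμ.differentiable two_ne_zero) hf₁ hf₂ hy.1 hy.2)).congr_fderiv ?_
  ext <;> simp <;> ring

lemma hasFDerivAt_gfun₂ (hμ : ContDiff ℝ 2 μ) (hf₁ : ContDiff ℝ 2 f₁) (hf₂ : ContDiff ℝ 2 f₂)
    (hP : 0 < heightAbove (midline f₁ f₂) x) (hQ : 0 < depthBelow f₂ x) :
    HasFDerivAt (gfun₂ μ f₁ f₂ ε Φ)
      (linForm₂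
        (-(Φ * (deriv μ (cutArg (midline f₁ f₂) f₂ ε x) * cutArgD₁₁ (midline f₁ f₂) f₂ ε x +
          deriv (deriv μ) (cutArg (midline f₁ f₂) f₂ ε x) * cutArgD₁ (midline f₁ f₂) f₂ ε x *
            cutArgD₁ (midline f₁ f₂) f₂ ε x)))
        (-(Φ * (deriv μ (cutArg (midline f₁ f₂) f₂ ε x) * cutArgD₁₂ (midline f₁ f₂) f₂ ε x +
          deriv (deriv μ) (cutArg (midline f₁ f₂) f₂ ε x) * cutArgD₁ (midline f₁ f₂) f₂ ε x *
            cutArgD₂ (midline f₁ f₂) f₂ ε x)))) x := by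
  have hd₁ := hf₁.differentiable two_ne_zero
  have hd₂ := hf₂.differentiable two_ne_zero
  have hm := differentiable_midline hd₁ hd₂
  have hm' : Differentiable ℝ (deriv (midline f₁ f₂)) := by
    rw [deriv_midline hd₁ hd₂]
    exact differentiable_midline hf₁.differentiable_deriv_two hf₂.differentiable_deriv_two
  have hU := isOpen_pos_heightAbove_depthBelow hd₁.continuous hd₂.continuous
  have hh := hasFDerivAt_cutArg (ε := ε) (hm _) (hd₂ _) hP.ne' hQ.ne'
  refine (((hμ.differentiable_deriv_two _).hasDerivAt.comp_hasFDerivAt x hh).mul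
    (hasFDerivAt_cutArgD₁ (ε := ε) (hm _) (hd₂ _) (hm' _) (hf₂.differentiable_deriv_two _)
      hP.ne' hQ.ne') |>.const_mul Φ |>.neg
    |>.congr_of_eventuallyEq (eventually_of_mem (hU.mem_nhds ⟨hP, hQ⟩) fun y hy =>
      gfun₂_eq (hμ.differentiable two_ne_zero) hd₁ hd₂ hy.1 hy.2)).congr_fderiv ?_
  ext <;> simp <;> ring

end StreamFunction

noncomputable def energyDensity (μ f₁ f₂ : ℝ → ℝ) (ε Φ : ℝ) (x : ℝ × ℝ) : ℝ :=
  (fderiv ℝ (gfun₁ μ f₁ f₂ ε Φ) x (1, 0)) ^ 2 + (fderiv ℝ (gfun₁ μ f₁ f₂ ε Φ) x (0, 1)) ^ 2 +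
    (fderiv ℝ (gfun₂ μ f₁ f₂ ε Φ) x (1, 0)) ^ 2 + (fderiv ℝ (gfun₂ μ f₁ f₂ ε Φ) x (0, 1)) ^ 2 +
    ((gfun₁ μ f₁ f₂ ε Φ x) ^ 2 + (gfun₂ μ f₁ f₂ ε Φ x) ^ 2) ^ 2

/-- `energyDensity` at a point where `G = Φ μ(h)`, with `a = μ'(h)`, `b = μ''(h)`, `(d₁, d₂) = ∇h`
and `dᵢⱼ = ∂ᵢ∂ⱼh`. -/
def energyPoly (Φ a b d₁ d₂ d₁₁ d₁₂ d₂₂ : ℝ) : ℝ :=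
  (Φ * (a * d₁₂ + b * d₁ * d₂)) ^ 2 + (Φ * (a * d₂₂ + b * d₂ * d₂)) ^ 2 +
    (-(Φ * (a * d₁₁ + b * d₁ * d₁))) ^ 2 + (-(Φ * (a * d₁₂ + b * d₁ * d₂))) ^ 2 +
    ((Φ * (a * d₂)) ^ 2 + (-(Φ * (a * d₁))) ^ 2) ^ 2

@[simp] lemma energyPoly_zero (Φ d₁ d₂ d₁₁ d₁₂ d₂₂ : ℝ) :
    energyPoly Φ 0 0 d₁ d₂ d₁₁ d₁₂ d₂₂ = 0 := by
  simp [energyPoly]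

lemma abs_mul_add_mul_mul_le {a b c d e M K D : ℝ} (ha : |a| ≤ M) (hb : |b| ≤ M)
    (hc : |c| ≤ 4 * K ^ 2 * D ^ 2) (hd : |d| ≤ 2 * K * D) (he : |e| ≤ 2 * K * D) :
    |a * c + b * d * e| ≤ 8 * M * K ^ 2 * D ^ 2 :=
  ((abs_add_le _ _).trans (add_le_add (abs_mul_le_of_abs_le ha hc)
    (abs_mul_le_of_abs_le (abs_mul_le_of_abs_le hb hd) he))).trans_eq (by ring)

lemma energyPoly_le {Φ a b d₁ d₂ d₁₁ d₁₂ d₂₂ M K D : ℝ} (hM : 1 ≤ M) (hK : 1 ≤ K)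
    (ha : |a| ≤ M) (hb : |b| ≤ M) (hd₁ : |d₁| ≤ 2 * K * D) (hd₂ : |d₂| ≤ 2 * K * D)
    (hd₁₁ : |d₁₁| ≤ 4 * K ^ 2 * D ^ 2) (hd₁₂ : |d₁₂| ≤ 4 * K ^ 2 * D ^ 2)
    (hd₂₂ : |d₂₂| ≤ 4 * K ^ 2 * D ^ 2) :
    energyPoly Φ a b d₁ d₂ d₁₁ d₁₂ d₂₂ ≤ 4 * (8 * M * K ^ 2) ^ 4 * (Φ ^ 2 + Φ ^ 4) * D ^ 4 := by
  set C := 8 * M * K ^ 2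
  have hD : 0 ≤ D := by nlinarith [abs_nonneg d₁]
  have hC : 1 ≤ C := by nlinarith
  have hC24 : C ^ 2 ≤ C ^ 4 := pow_le_pow_right₀ hC (by norm_num)
  have hg : ∀ {d : ℝ}, |d| ≤ 2 * K * D → (a * d) ^ 2 ≤ (C * D) ^ 2 := fun hd =>
    sq_le_sq_of_abs_le ((abs_mul_le_of_abs_le ha hd).trans (by
      nlinarith [mul_nonneg (mul_nonneg (by linarith : (0:ℝ) ≤ M) hD)
        (by nlinarith : (0:ℝ) ≤ 8 * K ^ 2 - 2 * K)]))
  have h₁₂ := sq_le_sq_of_abs_le (abs_mul_add_mul_mul_le ha hb hd₁₂ hd₁ hd₂)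
  have h₂₂ := sq_le_sq_of_abs_le (abs_mul_add_mul_mul_le ha hb hd₂₂ hd₂ hd₂)
  have h₁₁ := sq_le_sq_of_abs_le (abs_mul_add_mul_mul_le ha hb hd₁₁ hd₁ hd₁)
  calc energyPoly Φ a b d₁ d₂ d₁₁ d₁₂ d₂₂
      = Φ ^ 2 * ((a * d₁₂ + b * d₁ * d₂) ^ 2 + (a * d₂₂ + b * d₂ * d₂) ^ 2 +
          (a * d₁₁ + b * d₁ * d₁) ^ 2 + (a * d₁₂ + b * d₁ * d₂) ^ 2) +
        Φ ^ 4 * ((a * d₂) ^ 2 + (a * d₁) ^ 2) ^ 2 := by rw [energyPoly]; ring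
    _ ≤ Φ ^ 2 * (4 * (C * D ^ 2) ^ 2) + Φ ^ 4 * (2 * (C * D) ^ 2) ^ 2 := by
        gcongr
        · linarith
        · linarith [hg hd₁, hg hd₂]
    _ ≤ 4 * C ^ 4 * (Φ ^ 2 + Φ ^ 4) * D ^ 4 := by
        have : 0 ≤ Φ ^ 2 * D ^ 4 := by positivity
        nlinarith

section Energy

variable {μ f₁ f₂ : ℝ → ℝ} {ε Φ : ℝ} {x : ℝ × ℝ}

lemma energyDensity_nonneg : 0 ≤ energyDensity μ f₁ f₂ ε Φ x := by
  unfold energyDensity; positivity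

lemma energyDensity_eq (hμ : ContDiff ℝ 2 μ) (hf₁ : ContDiff ℝ 2 f₁) (hf₂ : ContDiff ℝ 2 f₂)
    (hP : 0 < heightAbove (midline f₁ f₂) x) (hQ : 0 < depthBelow f₂ x) :
    energyDensity μ f₁ f₂ ε Φ x =
      energyPoly Φ (deriv μ (cutArg (midline f₁ f₂) f₂ ε x))
        (deriv (deriv μ) (cutArg (midline f₁ f₂) f₂ ε x)) (cutArgD₁ (midline f₁ f₂) f₂ ε x)
        (cutArgD₂ (midline f₁ f₂) f₂ ε x) (cutArgD₁₁ (midline f₁ f₂) f₂ ε x)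
        (cutArgD₁₂ (midline f₁ f₂) f₂ ε x) (cutArgD₂₂ (midline f₁ f₂) f₂ ε x) := by
  have hd₁ := hf₁.differentiable two_ne_zero
  have hd₂ := hf₂.differentiable two_ne_zero
  have hμ' := hμ.differentiable two_ne_zero
  simp only [energyDensity, (hasFDerivAt_gfun₁ hμ hd₁ hd₂ hP hQ).fderiv,
    (hasFDerivAt_gfun₂ hμ hf₁ hf₂ hP hQ).fderiv, gfun₁_eq hμ' hd₁ hd₂ hP hQ,
    gfun₂_eq hμ' hd₁ hd₂ hP hQ, linForm₂_apply, mul_one, mul_zero, add_zero, zero_add]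
  rfl

lemma energyDensity_eq_zero_of_heightAbove_le (hμ : ContDiff ℝ 2 μ)
    (hμ₀ : ∀ t : ℝ, 1 ≤ t → μ t = 0) (hf₁ : ContDiff ℝ 2 f₁) (hf₂ : ContDiff ℝ 2 f₂)
    (hε : 0 < ε) (hQ : 0 < depthBelow f₂ x)
    (hPQ : heightAbove (midline f₁ f₂) x ≤ depthBelow f₂ x) : energyDensity μ f₁ f₂ ε Φ x = 0 := by
  by_cases hP : 0 < heightAbove (midline f₁ f₂) x
  · obtain ⟨h₁, h₂⟩ := derivs_eq_zero_of_eqOn_const hμ (uniqueDiffOn_Ici 1) hμ₀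
      (one_le_cutArg hε hP hPQ)
    rw [energyDensity_eq hμ hf₁ hf₂ hP hQ, h₁, h₂, energyPoly_zero]
  · obtain ⟨h₁, h₂⟩ := gfun_eventuallyEq_zero (Φ := Φ) hf₁.continuous hf₂.continuous hε hμ₀
      ((not_lt.1 hP).trans_lt hQ)
    simp [energyDensity, h₁.eq_of_nhds, h₂.eq_of_nhds, h₁.fderiv_eq, h₂.fderiv_eq]

lemma inv_le_of_cutArg_pos (hε : 0 < ε) (hQ : 0 < depthBelow f₂ x)
    (hQP : depthBelow f₂ x < heightAbove (midline f₁ f₂) x)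
    (hh : 0 < cutArg (midline f₁ f₂) f₂ ε x) :
    (f₂ x.1 - f₁ x.1)⁻¹ ≤ 4 * Real.exp ε⁻¹ / (f₂ x.1 - f₁ x.1) ∧
    |(heightAbove (midline f₁ f₂) x)⁻¹| ≤ 4 * Real.exp ε⁻¹ / (f₂ x.1 - f₁ x.1) ∧
    |(depthBelow f₂ x)⁻¹| ≤ 4 * Real.exp ε⁻¹ / (f₂ x.1 - f₁ x.1) := by
  have hP := hQ.trans hQP
  have hw : 0 < f₂ x.1 - f₁ x.1 := by linarith [heightAbove_midline_add_depthBelow f₁ f₂ x]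
  have hE : 1 ≤ Real.exp ε⁻¹ := Real.one_le_exp (inv_nonneg.2 hε.le)
  have hP4 : (heightAbove (midline f₁ f₂) x)⁻¹ ≤ 4 / (f₂ x.1 - f₁ x.1) := by
    rw [← inv_div]
    exact inv_anti₀ (by positivity) (by linarith [heightAbove_midline_add_depthBelow f₁ f₂ x])
  have h4D : 4 / (f₂ x.1 - f₁ x.1) ≤ 4 * Real.exp ε⁻¹ / (f₂ x.1 - f₁ x.1) := by
    gcongr; linarith
  refine ⟨?_, ?_, ?_⟩
  · calc (f₂ x.1 - f₁ x.1)⁻¹ ≤ 4 / (f₂ x.1 - f₁ x.1) := by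
          rw [inv_eq_one_div]; gcongr; norm_num
      _ ≤ _ := h4D
  · rw [abs_of_pos (inv_pos.2 hP)]; exact hP4.trans h4D
  · rw [abs_of_pos (inv_pos.2 hQ)]
    calc (depthBelow f₂ x)⁻¹ ≤ Real.exp ε⁻¹ * (heightAbove (midline f₁ f₂) x)⁻¹ :=
          inv_depthBelow_le hε hP hQ hh
      _ ≤ Real.exp ε⁻¹ * (4 / (f₂ x.1 - f₁ x.1)) := by gcongr
      _ = _ := by ring

lemma energyDensity_le_of_depthBelow_lt {M K : ℝ} (hμ : ContDiff ℝ 2 μ)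
    (hμ₁ : ∀ t : ℝ, t ≤ 0 → μ t = 1) (hμ₀ : ∀ t : ℝ, 1 ≤ t → μ t = 0) (hM : 1 ≤ M)
    (hμM : ∀ t, |deriv μ t| ≤ M ∧ |deriv (deriv μ) t| ≤ M)
    (hf₁ : ContDiff ℝ 2 f₁) (hf₂ : ContDiff ℝ 2 f₂) (hK : 1 ≤ K)
    (hf₁' : |deriv f₁ x.1| ≤ K) (hf₂' : |deriv f₂ x.1| ≤ K)
    (hf₁'' : |deriv (deriv f₁) x.1 * (f₂ x.1 - f₁ x.1)| ≤ K)
    (hf₂'' : |deriv (deriv f₂) x.1 * (f₂ x.1 - f₁ x.1)| ≤ K)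
    (hε : ε ∈ Ioo 0 1) (hQ : 0 < depthBelow f₂ x)
    (hQP : depthBelow f₂ x < heightAbove (midline f₁ f₂) x) :
    energyDensity μ f₁ f₂ ε Φ x ≤ 4 * (8 * M * K ^ 2) ^ 4 * (4 * Real.exp ε⁻¹) ^ 4 *
      (Φ ^ 2 + Φ ^ 4) * ((f₂ x.1 - f₁ x.1) ^ 4)⁻¹ := by
  have hP := hQ.trans hQP
  rw [energyDensity_eq hμ hf₁ hf₂ hP hQ]
  by_cases hh : cutArg (midline f₁ f₂) f₂ ε x ∈ Ioo 0 1
  · obtain ⟨hwD, hPD, hQD⟩ := inv_le_of_cutArg_pos hε.1 hQ hQP hh.1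
    have hw : 0 < f₂ x.1 - f₁ x.1 := by linarith [heightAbove_midline_add_depthBelow f₁ f₂ x]
    have hε1 : |ε| ≤ 1 := abs_le.2 ⟨by linarith [hε.1], hε.2.le⟩
    have hd₁ := hf₁.differentiable two_ne_zero
    have hd₂ := hf₂.differentiable two_ne_zero
    have hm' : |deriv (midline f₁ f₂) x.1| ≤ K := by
      rw [deriv_midline hd₁ hd₂]; exact abs_midline_le hf₁' hf₂'
    have hu'' := abs_le_mul_of_abs_mul_le hf₂'' hw hwD
    have hm'' :
        |deriv (deriv (midline f₁ f₂)) x.1| ≤ K * (4 * Real.exp ε⁻¹ / (f₂ x.1 - f₁ x.1)) := by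
      rw [deriv_midline hd₁ hd₂, deriv_midline hf₁.differentiable_deriv_two
        hf₂.differentiable_deriv_two]
      exact abs_midline_le (abs_le_mul_of_abs_mul_le hf₁'' hw hwD) hu''
    refine (energyPoly_le hM hK (hμM _).1 (hμM _).2 (abs_cutArgD₁_le hε1 hm' hf₂' hPD hQD)
      (abs_cutArgD₂_le hK hε1 hPD hQD)
      (abs_cutArgD₁₁_le hK hε1 hm' hf₂' hm'' hu'' hPD hQD)
      (abs_cutArgD₁₂_le hK hε1 hm' hf₂' hPD hQD) (abs_cutArgD₂₂_le hK hε1 hPD hQD)).trans_eq ?_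
    rw [div_pow, div_eq_mul_inv]
    ring
  · rw [mem_Ioo, not_and_or, not_lt, not_lt] at hh
    obtain ⟨h₁, h₂⟩ := hh.elim
      (fun ht => derivs_eq_zero_of_eqOn_const hμ (uniqueDiffOn_Iic 0) hμ₁ (mem_Iic.2 ht))
      (fun ht => derivs_eq_zero_of_eqOn_const hμ (uniqueDiffOn_Ici 1) hμ₀ (mem_Ici.2 ht))
    rw [h₁, h₂, energyPoly_zero]
    positivity

end Energy

lemma integrableOn_regionBetween_Ioo {G : ℝ × ℝ → ℝ} {l u : ℝ → ℝ} (hG : Continuous G)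
    (hl : Continuous l) (hu : Continuous u) (a b : ℝ) :
    IntegrableOn G (regionBetween l u (Ioo a b)) := by
  obtain ⟨A, hA⟩ := ((isCompact_Icc (a := a) (b := b)).image hl).bddBelow
  obtain ⟨B, hB⟩ := ((isCompact_Icc (a := a) (b := b)).image hu).bddAbove
  refine (hG.continuousOn.integrableOn_compact
    ((isCompact_Icc (a := a) (b := b)).prod (isCompact_Icc (a := A) (b := B)))).mono_set ?_
  rintro ⟨t, y⟩ ⟨ht, hy⟩
  have ht' : t ∈ Icc a b := Ioo_subset_Icc_self ht
  exact ⟨ht', (hA ⟨t, ht', rfl⟩).trans hy.1.le, hy.2.le.trans (hB ⟨t, ht', rfl⟩)⟩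

lemma setIntegral_regionBetween {F l u : ℝ → ℝ} {s : Set ℝ} (hs : MeasurableSet s)
    (hl : Measurable l) (hu : Measurable u) (hlu : ∀ t ∈ s, l t ≤ u t)
    (hF : IntegrableOn (fun y : ℝ × ℝ => F y.1) (regionBetween l u s)) :
    ∫ y in regionBetween l u s, F y.1 = ∫ t in s, F t * (u t - l t) := by
  have hR := measurableSet_regionBetween hl hu hs
  rw [← integral_indicator hR, ← integral_indicator hs, Measure.volume_eq_prod,
    integral_prod _ (by simpa [Measure.volume_eq_prod] using hF.integrable_indicator hR)]
  congr 1 with t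
  by_cases ht : t ∈ s
  · have : ∀ y, (regionBetween l u s).indicator (fun y : ℝ × ℝ => F y.1) (t, y) =
        (Ioo (l t) (u t)).indicator (fun _ => F t) y := fun y => by
      simp only [indicator, regionBetween, mem_ofPred_eq, ht, true_and]
    simp only [this, integral_indicator measurableSet_Ioo, setIntegral_const,
      Real.volume_real_Ioo_of_le (hlu t ht), smul_eq_mul, indicator_of_mem ht]
    ring
  · simp [regionBetween, ht, indicator]

lemma setIntegral_le_setIntegral_of_eq_zero {α : Type*} [MeasurableSpace α] {ν : Measure α}
    {S F : α → ℝ} {s t : Set α} (hs : MeasurableSet s) (ht : MeasurableSet t) (hts : t ⊆ s)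
    (hzero : ∀ x ∈ s \ t, S x = 0) (hS : ∀ x ∈ t, 0 ≤ S x) (hle : ∀ x ∈ t, S x ≤ F x)
    (hF : IntegrableOn F t ν) : ∫ x in s, S x ∂ν ≤ ∫ x in t, F x ∂ν := by
  rw [setIntegral_eq_of_subset_of_forall_sdiff_eq_zero hs hts hzero]
  exact integral_mono_of_nonneg (ae_restrict_of_forall_mem ht hS) hF
    (ae_restrict_of_forall_mem ht hle)

lemma integrableOn_upperQuarter {f₁ f₂ : ℝ → ℝ} (hf₁ : Continuous f₁) (hf₂ : Continuous f₂)
    (hw : ∀ t, 0 < f₂ t - f₁ t) (c a b : ℝ) :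
    IntegrableOn (fun y : ℝ × ℝ => c * ((f₂ y.1 - f₁ y.1) ^ 4)⁻¹)
      (regionBetween (midline (midline f₁ f₂) f₂) f₂ (Ioo a b)) :=
  integrableOn_regionBetween_Ioo
    (by fun_prop (disch := exact fun y => pow_ne_zero 4 (hw y.1).ne'))
    (continuous_midline (continuous_midline hf₁ hf₂) hf₂) hf₂ a b

lemma setIntegral_energyDensity_le {μ f₁ f₂ : ℝ → ℝ} {ε Φ M K : ℝ} (hμ : ContDiff ℝ 2 μ)
    (hμ₁ : ∀ t : ℝ, t ≤ 0 → μ t = 1) (hμ₀ : ∀ t : ℝ, 1 ≤ t → μ t = 0) (hM : 1 ≤ M)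
    (hμM : ∀ t, |deriv μ t| ≤ M ∧ |deriv (deriv μ) t| ≤ M)
    (hf₁ : ContDiff ℝ 2 f₁) (hf₂ : ContDiff ℝ 2 f₂) (hK : 1 ≤ K)
    (hf₁' : ∀ t, |deriv f₁ t| ≤ K) (hf₂' : ∀ t, |deriv f₂ t| ≤ K)
    (hf₁'' : ∀ t, |deriv (deriv f₁) t * (f₂ t - f₁ t)| ≤ K)
    (hf₂'' : ∀ t, |deriv (deriv f₂) t * (f₂ t - f₁ t)| ≤ K)
    (hε : ε ∈ Ioo 0 1) (hw : ∀ t, 0 < f₂ t - f₁ t) (a b : ℝ) :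
    ∫ x in chan f₁ f₂ a b, energyDensity μ f₁ f₂ ε Φ x ≤
      ∫ y in regionBetween (midline (midline f₁ f₂) f₂) f₂ (Ioo a b),
        4 * (8 * M * K ^ 2) ^ 4 * (4 * Real.exp ε⁻¹) ^ 4 * (Φ ^ 2 + Φ ^ 4) *
          ((f₂ y.1 - f₁ y.1) ^ 4)⁻¹ := by
  have hl := continuous_midline (continuous_midline hf₁.continuous hf₂.continuous) hf₂.continuous
  refine setIntegral_le_setIntegral_of_eq_zero ?_ ?_ ?_ ?_ ?_ ?_ ?_
  · rw [chan_eq_regionBetween]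
    exact measurableSet_regionBetween hf₁.continuous.measurable hf₂.continuous.measurable
      measurableSet_Ioo
  · exact measurableSet_regionBetween hl.measurable hf₂.continuous.measurable measurableSet_Ioo
  · rintro x ⟨hx, hlx, hxu⟩
    have hwx := hw x.1
    exact ⟨hx.1, hx.2, by simp only [midline] at hlx; linarith, hxu⟩
  · rintro x ⟨⟨hax, hxb, -, hxu⟩, hx⟩
    refine energyDensity_eq_zero_of_heightAbove_le hμ hμ₀ hf₁ hf₂ hε.1 (sub_pos.2 hxu)
      (not_lt.1 fun h => hx ⟨⟨hax, hxb⟩, depthBelow_lt_heightAbove_iff.1 h, hxu⟩)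
  · exact fun x _ => energyDensity_nonneg
  · rintro x ⟨-, hlx, hxu⟩
    exact energyDensity_le_of_depthBelow_lt hμ hμ₁ hμ₀ hM hμM hf₁ hf₂ hK (hf₁' _) (hf₂' _)
      (hf₁'' _) (hf₂'' _) hε (sub_pos.2 hxu) (depthBelow_lt_heightAbove_iff.2 hlx)
  · exact integrableOn_upperQuarter hf₁.continuous hf₂.continuous hw _ a b

lemma setIntegral_upperQuarter {f₁ f₂ : ℝ → ℝ} (hf₁ : Continuous f₁) (hf₂ : Continuous f₂)
    (hw : ∀ t, 0 < f₂ t - f₁ t) (c : ℝ) {a b : ℝ} (hab : a ≤ b) :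
    ∫ y in regionBetween (midline (midline f₁ f₂) f₂) f₂ (Ioo a b),
        c * ((f₂ y.1 - f₁ y.1) ^ 4)⁻¹ =
      c / 4 * ∫ t in a..b, ((f₂ t - f₁ t) ^ 3)⁻¹ := by
  have hl := continuous_midline (continuous_midline hf₁ hf₂) hf₂
  rw [setIntegral_regionBetween (F := fun t => c * ((f₂ t - f₁ t) ^ 4)⁻¹) measurableSet_Ioo
      hl.measurable hf₂.measurable (fun t _ => by simp only [midline]; linarith [hw t])
      (integrableOn_upperQuarter hf₁ hf₂ hw c a b),
    intervalIntegral.integral_of_le hab, integral_Ioc_eq_integral_Ioo, ← integral_const_mul]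
  refine setIntegral_congr_fun measurableSet_Ioo fun t _ => ?_
  have := (hw t).ne'
  simp only [midline]
  field_simp
  ring

theorem stmt_12_general (μ : ℝ → ℝ)
    (hμsmooth : ContDiff ℝ (⊤ : ℕ∞) μ)
    (hμ₁ : ∀ t : ℝ, t ≤ 0 → μ t = 1) (hμ₀ : ∀ t : ℝ, 1 ≤ t → μ t = 0)
    (β : ℝ) (ε : ℝ) (hε : ε ∈ Ioo (0 : ℝ) 1) (γ : ℝ) :
    ∃ Cγ : ℝ, 0 < Cγ ∧
      ∀ (f₁ f₂ : ℝ → ℝ) (d Φ : ℝ),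
        ContDiff ℝ (⊤ : ℕ∞) f₁ → ContDiff ℝ (⊤ : ℕ∞) f₂ →
        0 < d → (∀ x₁ : ℝ, d ≤ f₂ x₁ - f₁ x₁) →
        (∀ x₁ : ℝ, |deriv f₁ x₁| ≤ β) → (∀ x₁ : ℝ, |deriv f₂ x₁| ≤ β) →
        (∀ x₁ : ℝ, |deriv (deriv f₁) x₁ * (f₂ x₁ - f₁ x₁)| ≤ γ) →
        (∀ x₁ : ℝ, |deriv (deriv f₂) x₁ * (f₂ x₁ - f₁ x₁)| ≤ γ) →
        0 ≤ Φ →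
        ∀ a b : ℝ, a < b →
          (∫ x in chan f₁ f₂ a b,
              ((fderiv ℝ (gfun₁ μ f₁ f₂ ε Φ) x (1, 0)) ^ 2 +
                (fderiv ℝ (gfun₁ μ f₁ f₂ ε Φ) x (0, 1)) ^ 2 +
                (fderiv ℝ (gfun₂ μ f₁ f₂ ε Φ) x (1, 0)) ^ 2 +
                (fderiv ℝ (gfun₂ μ f₁ f₂ ε Φ) x (0, 1)) ^ 2 +
                ((gfun₁ μ f₁ f₂ ε Φ x) ^ 2 + (gfun₂ μ f₁ f₂ ε Φ x) ^ 2) ^ 2)) ≤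
            Cγ * (Φ ^ 2 + Φ ^ 4) * ∫ x₁ in a..b, ((f₂ x₁ - f₁ x₁) ^ 3)⁻¹ := by
  have hμ : ContDiff ℝ 2 μ := hμsmooth.of_le (WithTop.coe_le_coe.2 le_top)
  obtain ⟨M, hM, hμM⟩ := exists_abs_deriv_le_of_cutoff hμ hμ₁ hμ₀
  set K := 1 + |β| + |γ|
  have hβK : β ≤ K := by linarith [le_abs_self β, abs_nonneg γ]
  have hγK : γ ≤ K := by linarith [le_abs_self γ, abs_nonneg β]
  refine ⟨(4 * (8 * M * K ^ 2) * Real.exp ε⁻¹) ^ 4, by positivity, ?_⟩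
  intro f₁ f₂ d Φ hf₁ hf₂ hd hdf hβ₁ hβ₂ hγ₁ hγ₂ _ a b hab
  have h2f₁ : ContDiff ℝ 2 f₁ := hf₁.of_le (WithTop.coe_le_coe.2 le_top)
  have h2f₂ : ContDiff ℝ 2 f₂ := hf₂.of_le (WithTop.coe_le_coe.2 le_top)
  have hw : ∀ t, 0 < f₂ t - f₁ t := fun t => hd.trans_le (hdf t)
  calc ∫ x in chan f₁ f₂ a b, energyDensity μ f₁ f₂ ε Φ x
      ≤ _ := setIntegral_energyDensity_le hμ hμ₁ hμ₀ hM hμM h2f₁ h2f₂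
        (by linarith [abs_nonneg β, abs_nonneg γ]) (fun t => (hβ₁ t).trans hβK)
        (fun t => (hβ₂ t).trans hβK) (fun t => (hγ₁ t).trans hγK) (fun t => (hγ₂ t).trans hγK)
        hε hw a b
    _ = _ := setIntegral_upperQuarter h2f₁.continuous h2f₂.continuous hw _ hab.le
    _ = _ := by ring

/-- the integral bound
`∫_{Ω_{a,b}} (|∇g|² + |g|⁴) dx ≤ C(ε,γ) (Φ² + Φ⁴) ∫_a^b f(x₁)^{−3} dx₁`
under the additional assumption `max_i sup |f_i'' f| ≤ γ < ∞`. -/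
theorem stmt_12 (μ : ℝ → ℝ)
    (hμsmooth : ContDiff ℝ (⊤ : ℕ∞) μ) (hμanti : Antitone μ)
    (hμ₁ : ∀ t : ℝ, t ≤ 0 → μ t = 1) (hμ₀ : ∀ t : ℝ, 1 ≤ t → μ t = 0)
    (β : ℝ) (ε : ℝ) (hε : ε ∈ Ioo (0 : ℝ) 1) (γ : ℝ) (hγ : 0 ≤ γ) :
    ∃ Cγ : ℝ, 0 < Cγ ∧
      ∀ (f₁ f₂ : ℝ → ℝ) (d Φ : ℝ),
        ContDiff ℝ (⊤ : ℕ∞) f₁ → ContDiff ℝ (⊤ : ℕ∞) f₂ →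
        0 < d → (∀ x₁ : ℝ, d ≤ f₂ x₁ - f₁ x₁) →
        (∀ x₁ : ℝ, |deriv f₁ x₁| ≤ β) → (∀ x₁ : ℝ, |deriv f₂ x₁| ≤ β) →
        (∀ x₁ : ℝ, |deriv (deriv f₁) x₁ * (f₂ x₁ - f₁ x₁)| ≤ γ) →
        (∀ x₁ : ℝ, |deriv (deriv f₂) x₁ * (f₂ x₁ - f₁ x₁)| ≤ γ) →
        0 ≤ Φ →
        ∀ a b : ℝ, a < b →
          (∫ x in chan f₁ f₂ a b,
              ((fderiv ℝ (gfun₁ μ f₁ f₂ ε Φ) x (1, 0)) ^ 2 +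
                (fderiv ℝ (gfun₁ μ f₁ f₂ ε Φ) x (0, 1)) ^ 2 +
                (fderiv ℝ (gfun₂ μ f₁ f₂ ε Φ) x (1, 0)) ^ 2 +
                (fderiv ℝ (gfun₂ μ f₁ f₂ ε Φ) x (0, 1)) ^ 2 +
                ((gfun₁ μ f₁ f₂ ε Φ x) ^ 2 + (gfun₂ μ f₁ f₂ ε Φ x) ^ 2) ^ 2)) ≤
            Cγ * (Φ ^ 2 + Φ ^ 4) * ∫ x₁ in a..b, ((f₂ x₁ - f₁ x₁) ^ 3)⁻¹ :=
  stmt_12_general μ hμsmooth hμ₁ hμ₀ β ε hε γ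
end
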